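/- arXiv:1712.03573 — 2 statements merged into one kernel-verified Lean document; each statement's English description precedes it below -/
import Mathlib

section
/- For every positive integer m, (1/m!) · ∑_{k=1}^{m} (-1)^{m-k} · C(m, k) · ∑_{j=1}^{k} (1/j) · (k^m - (k-j)^m) = H_m, where H_m is the m-th harmonic number. -/
/-!
The outer sum is the `m`-th forward difference at `0` of
`F k = ∑_{j ≤ k} (k^m - (k-j)^m) / j`. Expanding `(k^m - (k-j)^m) / j = ∑_{t<m} k^t (k-j)^(m-1-t)`
and summing over `j` with Faulhaber's formula shows that `F` is a polynomial of degree `m` with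
leading coefficient `∑_{t<m} 1 / (m - t) = H_m`, and the `m`-th forward difference of such a
polynomial is `m! H_m`.
-/

open Finset Polynomial fwdDiff
open scoped Nat

namespace Polynomial

variable {R : Type*} [CommRing R]

theorem fwdDiff_iter_eval_eq_factorial_mul_coeff {P : R[X]} {n : ℕ} (hP : P.natDegree ≤ n)
    (x : R) : (Δ_[1])^[n] P.eval x = n ! * P.coeff n := by
  rcases hP.lt_or_eq with hlt | rfl
  · rw [fwdDiff_iter_eq_zero_of_degree_lt hlt, coeff_eq_zero_of_natDegree_lt hlt]
    simp
  · rw [fwdDiff_iter_degree_eq_factorial]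
    simp only [Pi.smul_apply, Pi.natCast_apply, smul_eq_mul, leadingCoeff]
    ring

theorem sum_Icc_alternating_choose_mul_eval {P : R[X]} {n : ℕ} (hP : P.natDegree ≤ n)
    (hP₀ : P.eval 0 = 0) :
    ∑ k ∈ Icc 1 n, (-1 : R) ^ (n - k) * n.choose k * P.eval (k : R) = n ! * P.coeff n := by
  rw [← fwdDiff_iter_eval_eq_factorial_mul_coeff hP 0, fwdDiff_iter_eq_sum_shift, range_eq_Ico,
    sum_eq_sum_Ico_succ_bot n.succ_pos]
  simp [hP₀, Ico_add_one_right_eq_Icc]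

end Polynomial

noncomputable def powerSumPoly (p : ℕ) : ℚ[X] :=
  C ((p : ℚ) + 1)⁻¹ * (Polynomial.bernoulli (p + 1) - C (_root_.bernoulli (p + 1)))

theorem eval_powerSumPoly (p n : ℕ) :
    (powerSumPoly p).eval (n : ℚ) = ∑ k ∈ range n, (k : ℚ) ^ p := by
  rw [powerSumPoly, eval_mul, eval_C, eval_sub, eval_C, ← sum_range_pow_eq_bernoulli_sub]
  field_simp

theorem natDegree_powerSumPoly_le (p : ℕ) : (powerSumPoly p).natDegree ≤ p + 1 := by
  refine natDegree_C_mul_le _ _ |>.trans (natDegree_sub_le_iff_left ?_ |>.mpr ?_)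
  · simp
  · exact natDegree_le_iff_coeff_eq_zero.mpr fun N hN ↦ by
      simp [coeff_bernoulli, hN.not_ge]

theorem coeff_powerSumPoly_succ (p : ℕ) : (powerSumPoly p).coeff (p + 1) = ((p : ℚ) + 1)⁻¹ := by
  simp [powerSumPoly, coeff_bernoulli]

theorem sum_Icc_inv_mul_pow_sub_pow (k m : ℕ) :
    ∑ j ∈ Icc 1 k, 1 / (j : ℚ) * ((k : ℚ) ^ m - ((k : ℚ) - j) ^ m) =
      ∑ t ∈ range m, (k : ℚ) ^ t * ∑ i ∈ range k, (i : ℚ) ^ (m - 1 - t) := by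
  have geom (j : ℕ) (hj : j ∈ Icc 1 k) : 1 / (j : ℚ) * ((k : ℚ) ^ m - ((k : ℚ) - j) ^ m) =
      ∑ t ∈ range m, (k : ℚ) ^ t * ((k : ℚ) - j) ^ (m - 1 - t) := by
    have hj : (j : ℚ) ≠ 0 := Nat.cast_ne_zero.mpr (Nat.one_le_iff_ne_zero.mp (mem_Icc.mp hj).1)
    rw [← geom_sum₂_mul, sub_sub_cancel]
    field_simp
  have reflect (s : ℕ) : ∑ j ∈ Icc 1 k, ((k : ℚ) - j) ^ s = ∑ i ∈ range k, (i : ℚ) ^ s := by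
    refine sum_nbij' (k - ·) (k - ·) ?_ ?_ ?_ ?_ ?_ <;> intro j hj <;>
      simp only [mem_Icc, mem_range] at hj ⊢ <;> first | omega | rw [Nat.cast_sub hj.2]
  rw [sum_congr rfl geom, sum_comm]
  simp_rw [← mul_sum, reflect]

noncomputable def harmonicDiffPoly (m : ℕ) : ℚ[X] :=
  ∑ t ∈ range m, X ^ t * powerSumPoly (m - 1 - t)

theorem eval_harmonicDiffPoly (m k : ℕ) :
    (harmonicDiffPoly m).eval (k : ℚ) =
      ∑ j ∈ Icc 1 k, 1 / (j : ℚ) * ((k : ℚ) ^ m - ((k : ℚ) - j) ^ m) := by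
  simp only [harmonicDiffPoly, eval_finsetSum, eval_mul, eval_pow, eval_X, eval_powerSumPoly,
    sum_Icc_inv_mul_pow_sub_pow]

theorem natDegree_harmonicDiffPoly_le (m : ℕ) : (harmonicDiffPoly m).natDegree ≤ m := by
  refine natDegree_sum_le_of_forall_le _ _ fun t ht ↦ ?_
  refine (natDegree_mul_le_of_le (natDegree_X_pow_le t) (natDegree_powerSumPoly_le _)).trans ?_
  simp only [mem_range] at ht
  omega

theorem coeff_harmonicDiffPoly (m : ℕ) : (harmonicDiffPoly m).coeff m = harmonic m := by
  rw [harmonicDiffPoly, finsetSum_coeff, harmonic, ← sum_range_reflect]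
  refine sum_congr rfl fun t ht ↦ ?_
  simp only [mem_range] at ht
  rw [coeff_X_pow_mul', if_pos (by omega), show m - (m - 1 - t) = t + 1 by omega,
    show m - 1 - (m - 1 - t) = t by omega, coeff_powerSumPoly_succ, Nat.cast_succ]

theorem stmt_5_general (m : ℕ) :
    (1 / (m.factorial : ℚ)) *
      ∑ k ∈ Finset.Icc 1 m, (-1 : ℚ) ^ (m - k) * (m.choose k) *
        ∑ j ∈ Finset.Icc 1 k, (1 / (j : ℚ)) * ((k : ℚ) ^ m - ((k : ℚ) - (j : ℚ)) ^ m) =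
      ∑ j ∈ Finset.Icc 1 m, (1 : ℚ) / j := by
  have h := sum_Icc_alternating_choose_mul_eval (natDegree_harmonicDiffPoly_le m)
    (by simpa using eval_harmonicDiffPoly m 0)
  simp only [eval_harmonicDiffPoly, coeff_harmonicDiffPoly] at h
  rw [h, harmonic_eq_sum_Icc]
  simp [Nat.factorial_ne_zero]

/-- For every positive integer `m`,
`(1/m!) ∑_{k=1}^{m} (-1)^{m-k} C(m,k) ∑_{j=1}^{k} (1/j)(k^m - (k-j)^m) = H_m`. -/
theorem stmt_5 (m : ℕ) (hm : 0 < m) :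
    (1 / (m.factorial : ℚ)) *
      ∑ k ∈ Finset.Icc 1 m, (-1 : ℚ) ^ (m - k) * (m.choose k) *
        ∑ j ∈ Finset.Icc 1 k, (1 / (j : ℚ)) * ((k : ℚ) ^ m - ((k : ℚ) - (j : ℚ)) ^ m) =
      ∑ j ∈ Finset.Icc 1 m, (1 : ℚ) / j :=
  stmt_5_general m
end

section
/- Let T(x) = ∑_{n≥1} (n^{n-1}/n!) x^n be the tree function over ℚ. Then T(x)/(1 - T(x)) = ∑_{i≥1} (i^i / i!) x^i as formal power series. -/
/-!
With `E = ∑_{n ≥ 0} nⁿ/n! xⁿ` the series `∑_{i ≥ 1} iⁱ/i! xⁱ` is `E - 1`, and the claim becomes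
`T E = E - 1`, which on the coefficient of `xⁿ/n!` is the Abel-type identity
`∑_{k=1}^n C(n,k) k^{k-1} (n-k)^{n-k} = n^n`. This is the value at `X = 0` of the polynomial identity
`∑_{k=1}^n C(n,k) k^{k-1} (X+n-k)^{n-k} = n (X+n)^{n-1}`, proved by induction on `n`: the derivative
of the identity for `n + 1` is `n + 1` times the identity for `n` shifted by `X ↦ X + 1`, and at
`X = -(n+1)` both sides vanish, the left one because the `(n+1)`-st finite difference of `k ↦ kⁿ`
is zero.
-/

open Finset
open scoped Nat

theorem sum_range_neg_one_pow_mul_choose_mul_pow_eq_zero {R : Type*} [CommRing R] {m n : ℕ}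
    (h : m < n) : ∑ k ∈ range (n + 1), (-1 : R) ^ (n - k) * n.choose k * (k : R) ^ m = 0 := by
  have := congrFun (fwdDiff_iter_pow_eq_zero_of_lt (R := R) h) 0
  rw [fwdDiff_iter_eq_sum_shift] at this
  simpa [zsmul_eq_mul] using this

section AbelIdentity

open Polynomial

theorem Polynomial.eq_of_derivative_eq_of_eval_eq {R : Type*} [Ring R] [IsAddTorsionFree R]
    {p q : R[X]} (hd : derivative p = derivative q) (x : R) (he : p.eval x = q.eval x) :
    p = q := by
  have hc := eq_C_of_derivative_eq_zero (p := p - q) (by rw [derivative_sub, hd, sub_self])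
  rw [← sub_eq_zero, hc, C_eq_zero]
  simpa [he] using (congrArg (eval x) hc).symm

theorem Polynomial.derivative_C_mul_X_add_C_pow {R : Type*} [CommRing R] (a b : R) (m : ℕ) :
    derivative (C a * (X + C b) ^ (m + 1)) = C (a * (m + 1)) * (X + C b) ^ m := by
  rw [derivative_C_mul, derivative_pow, derivative_add, derivative_X, derivative_C, add_zero,
    mul_one, add_tsub_cancel_right, Nat.cast_succ, map_mul, map_add, map_one]
  ring

noncomputable def abelSum (n : ℕ) : ℤ[X] :=
  ∑ k ∈ Icc 1 n, C ((n.choose k * k ^ (k - 1) : ℕ) : ℤ) * (X + C ((n - k : ℕ) : ℤ)) ^ (n - k)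

theorem derivative_abelSum_succ (n : ℕ) :
    derivative (abelSum (n + 1)) = C ((n + 1 : ℕ) : ℤ) * (abelSum n).comp (X + 1) := by
  rw [abelSum, abelSum, sum_Icc_succ_top (by omega), Nat.sub_self, pow_zero, mul_one,
    derivative_add, derivative_C, add_zero, derivative_sum, Polynomial.sum_comp, mul_sum]
  refine sum_congr rfl fun k hk => ?_
  have hk := mem_Icc.mp hk
  rw [show n + 1 - k = n - k + 1 by omega, derivative_C_mul_X_add_C_pow]
  simp only [mul_comp, C_comp, pow_comp, add_comp, X_comp]
  have hc : ((n + 1).choose k : ℤ) * ((n - k : ℕ) + 1) = (n + 1) * n.choose k := by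
    have := Nat.choose_mul_succ_eq n k
    rw [show n + 1 - k = n - k + 1 by omega, mul_comm] at this
    exact_mod_cast this.symm
  rw [← mul_assoc, ← C_mul, show (1 : ℤ[X]) = C 1 by simp, add_assoc, ← C_add]
  congr 2
  · push_cast
    linear_combination (k : ℤ) ^ (k - 1) * hc
  · rw [Nat.cast_succ, add_comm (1 : ℤ)]

theorem eval_neg_abelSum {n : ℕ} (hn : 2 ≤ n) : (abelSum n).eval (-(n : ℤ)) = 0 := by
  have hterm : ∀ k ∈ Icc 1 n,
      (C ((n.choose k * k ^ (k - 1) : ℕ) : ℤ) * (X + C ((n - k : ℕ) : ℤ)) ^ (n - k)).eval (-n) =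
        (-1 : ℤ) ^ (n - k) * n.choose k * (k : ℤ) ^ (n - 1) := by
    intro k hk
    have hk := mem_Icc.mp hk
    have hx : -(n : ℤ) + ((n - k : ℕ) : ℤ) = -1 * k := by
      push_cast [hk.2]
      ring
    rw [eval_mul, eval_C, eval_pow, eval_add, eval_X, eval_C, hx, mul_pow,
      show n - 1 = (k - 1) + (n - k) by omega, pow_add]
    push_cast
    ring
  rw [abelSum, eval_finsetSum, sum_congr rfl hterm,
    ← sum_range_neg_one_pow_mul_choose_mul_pow_eq_zero (m := n - 1) (n := n) (by omega)]
  refine sum_subset (fun k hk => mem_range.mpr (by rw [mem_Icc] at hk; omega)) fun k hk hk' => ?_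
  obtain rfl : k = 0 := by rw [mem_range] at hk; rw [mem_Icc] at hk'; omega
  simp [show n - 1 ≠ 0 by omega]

theorem abelSum_eq (n : ℕ) : abelSum n = C (n : ℤ) * (X + C (n : ℤ)) ^ (n - 1) := by
  induction n with
  | zero => simp [abelSum]
  | succ n ih =>
    rcases n.eq_zero_or_pos with rfl | hn
    · simp [abelSum]
    refine eq_of_derivative_eq_of_eval_eq ?_ (-(n + 1 : ℕ)) ?_
    · rw [derivative_abelSum_succ, ih]
      simp only [derivative_mul, derivative_C, zero_mul, zero_add, derivative_pow,
        derivative_add, derivative_X, add_zero, mul_one, mul_comp, C_comp, pow_comp, add_comp,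
        X_comp]
      rw [Nat.add_sub_cancel, Nat.cast_succ, C_add, C_1]
      ring
    · rw [eval_neg_abelSum (by omega)]
      simp [hn.ne']

theorem sum_Icc_choose_mul_pow_mul_pow {n : ℕ} (hn : 0 < n) :
    ∑ k ∈ Icc 1 n, n.choose k * k ^ (k - 1) * (n - k) ^ (n - k) = n ^ n := by
  have h := congrArg (eval 0) (abelSum_eq n)
  simp only [abelSum, eval_finsetSum, eval_mul, eval_C, eval_pow, eval_add, eval_X,
    zero_add] at h
  rw [← mul_pow_sub_one hn.ne']
  exact_mod_cast h

end AbelIdentity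

open PowerSeries

theorem PowerSeries.coeff_mk_div_factorial_mul_mk_div_factorial {K : Type*} [Field K]
    [CharZero K] (a b : ℕ → K) (n : ℕ) :
    coeff n (mk (fun i => a i / i !) * mk (fun j => b j / j !)) =
      (∑ k ∈ range (n + 1), n.choose k * a k * b (n - k)) / n ! := by
  rw [coeff_mul, Nat.sum_antidiagonal_eq_sum_range_succ_mk, sum_div]
  refine sum_congr rfl fun k hk => ?_
  have h := Nat.choose_mul_factorial_mul_factorial (mem_range_succ_iff.mp hk)
  simp only [coeff_mk]
  have hc : (n.choose k : K) ≠ 0 := by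
    exact_mod_cast (Nat.choose_pos (mem_range_succ_iff.mp hk)).ne'
  rw [← h]
  push_cast
  field_simp

noncomputable def treeSeries : ℚ⟦X⟧ :=
  mk fun n => if n = 0 then 0 else (n : ℚ) ^ (n - 1) / n !

theorem treeSeries_mul_eq :
    treeSeries * mk (fun j => (j : ℚ) ^ j / j !) =
      mk fun n => if n = 0 then 0 else (n : ℚ) ^ n / n ! := by
  have hT : treeSeries = mk fun i => (if i = 0 then 0 else (i : ℚ) ^ (i - 1)) / i ! := by
    simp only [treeSeries, ite_div, zero_div]
  ext n
  rw [hT, coeff_mk_div_factorial_mul_mk_div_factorial, coeff_mk]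
  rcases n.eq_zero_or_pos with rfl | hn
  · simp
  rw [if_neg hn.ne', range_eq_Ico, sum_eq_sum_Ico_succ_bot (by omega), if_pos rfl,
    mul_zero, zero_mul, zero_add, Ico_add_one_right_eq_Icc, zero_add,
    ← Nat.cast_pow, ← sum_Icc_choose_mul_pow_mul_pow hn]
  push_cast
  congr 1
  refine sum_congr rfl fun k hk => ?_
  rw [if_neg (by rw [mem_Icc] at hk; omega)]

/-- With `T(x) = ∑_{n ≥ 1} (n^{n-1}/n!) x^n` the tree function over `ℚ`,
`T/(1-T) = ∑_{i ≥ 1} (i^i/i!) x^i`, i.e. `(1 - T) * ∑_{i ≥ 1} (i^i/i!) x^i = T`. -/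
theorem stmt_8 :
    (1 - PowerSeries.mk fun n => if n = 0 then 0 else (n : ℚ) ^ (n - 1) / n.factorial) *
        (PowerSeries.mk fun i => if i = 0 then 0 else (i : ℚ) ^ i / i.factorial) =
      PowerSeries.mk fun n => if n = 0 then 0 else (n : ℚ) ^ (n - 1) / n.factorial := by
  have hE : mk (fun j => (j : ℚ) ^ j / j !) =
      1 + mk fun i => if i = 0 then 0 else (i : ℚ) ^ i / i ! := by
    ext (_ | i) <;> simp [PowerSeries.coeff_one]
  have h := treeSeries_mul_eq
  rw [hE] at h
  change (1 - treeSeries) * _ = treeSeries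
  linear_combination (-1 : ℚ⟦X⟧) * h
end
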